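/- arXiv:quant-ph/0203087 — 8 statements merged into one kernel-verified Lean document; each statement's English description precedes it below -/
import Mathlib

section
/- (Uhlmann's theorem on convex roofs.) Let G be a nonnegative real-valued function on unit vectors of ℂ^{n} that depends only on the rank-one projector |ψ⟩⟨ψ| (i.e., G(ψ) = G(ψ') whenever |ψ⟩⟨ψ| = |ψ'⟩⟨ψ'|). Define 𝒢 on density matrices by 𝒢(ρ) = inf over pure-state decompositions {p_i, ψ_i} of ρ of Σ_i p_i G(ψ_i). Then: (a) 𝒢 is convex on the set of density matrices; (b) 𝒢(|ψ⟩⟨ψ|) = G(ψ) for every unit vector ψ; and (c) every convex function h on the set of density matrices satisfying h(|ψ⟩⟨ψ|) = G(ψ) for all unit vectors ψ satisfies h(ρ) ≤ 𝒢(ρ) for all density matrices ρ. That is, 𝒢 is the largest convex function agreeing with G on pure states. -/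
/-!
A pure state admits only the trivial pure-state decomposition: if
`|ψ⟩⟨ψ| = ∑ pᵢ |χᵢ⟩⟨χᵢ|`, then `1 = ⟨ψ|ρ|ψ⟩ = ∑ pᵢ |⟨χᵢ|ψ⟩|²` with every `|⟨χᵢ|ψ⟩| ≤ 1`, so each
`|⟨χᵢ|ψ⟩| = 1` and the equality case of Cauchy–Schwarz gives `|χᵢ⟩⟨χᵢ| = |ψ⟩⟨ψ|`; hence the roof
agrees with `G` on pure states. Concatenating decompositions of `ρ₁` and `ρ₂` with weights scaled
by `t` and `1 - t` gives one of their mixture, which makes the roof convex. Finally, Jensen's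
inequality bounds any convex `h` agreeing with `G` on pure states by every `∑ pᵢ G(ψᵢ)`, and
density matrices do have pure-state decompositions by the spectral theorem.
-/

open Matrix
open scoped ComplexOrder

noncomputable section

def IsDensityMatrix {m : Type*} [Fintype m] [DecidableEq m] (ρ : Matrix m m ℂ) : Prop :=
  ρ.PosSemidef ∧ ρ.trace = 1

namespace Matrix

variable {𝕜 m : Type*} [RCLike 𝕜]

theorem vecMulVec_smul_star_smul {c : 𝕜} (hc : ‖c‖ = 1) (a : m → 𝕜) :
    vecMulVec (c • a) (star (c • a)) = vecMulVec a (star a) := by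
  have : c * star c = 1 := by simpa [hc] using RCLike.mul_conj c
  rw [star_smul, smul_vecMulVec, vecMulVec_smul, smul_smul, this, one_smul]

variable [Fintype m]

theorem star_dotProduct_vecMulVec_self_star_mulVec (a b : m → 𝕜) :
    star b ⬝ᵥ (vecMulVec a (star a) *ᵥ b) = ((‖star a ⬝ᵥ b‖ ^ 2 : ℝ) : 𝕜) := by
  rw [vecMulVec_mulVec, op_smul_eq_smul, dotProduct_smul, smul_eq_mul, star_dotProduct (v := b),
    RCLike.ofReal_pow]
  exact RCLike.mul_conj _

theorem norm_toLp_of_star_dotProduct_self_eq_one {a : m → 𝕜} (ha : star a ⬝ᵥ a = 1) :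
    ‖WithLp.toLp 2 a‖ = 1 := by
  rw [norm_eq_sqrt_re_inner (𝕜 := 𝕜), EuclideanSpace.inner_toLp_toLp, dotProduct_comm, ha]
  simp

theorem norm_star_dotProduct_le_one {a b : m → 𝕜} (ha : star a ⬝ᵥ a = 1)
    (hb : star b ⬝ᵥ b = 1) : ‖star a ⬝ᵥ b‖ ≤ 1 := by
  simpa [EuclideanSpace.inner_toLp_toLp, dotProduct_comm,
    norm_toLp_of_star_dotProduct_self_eq_one ha, norm_toLp_of_star_dotProduct_self_eq_one hb]
    using norm_inner_le_norm (𝕜 := 𝕜) (WithLp.toLp 2 a) (WithLp.toLp 2 b)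

theorem eq_smul_of_norm_star_dotProduct_eq_one {a b : m → 𝕜} (ha : star a ⬝ᵥ a = 1)
    (hb : star b ⬝ᵥ b = 1) (h : ‖star a ⬝ᵥ b‖ = 1) : b = (star a ⬝ᵥ b) • a := by
  have hcs := ((norm_inner_eq_norm_tfae 𝕜 (WithLp.toLp 2 a) (WithLp.toLp 2 b)).out 0 1).mp
  rw [norm_toLp_of_star_dotProduct_self_eq_one ha, norm_toLp_of_star_dotProduct_self_eq_one hb,
    EuclideanSpace.inner_toLp_toLp, EuclideanSpace.inner_toLp_toLp, ← dotProduct_comm (star a),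
    ← dotProduct_comm (star a), ha, div_one, mul_one] at hcs
  obtain h0 | hb' := hcs h
  · obtain rfl : a = 0 := congrArg WithLp.ofLp h0
    simp at ha
  · exact congrArg WithLp.ofLp hb'

variable [DecidableEq m]

theorem IsHermitian.eq_sum_eigenvalues_smul_vecMulVec {A : Matrix m m 𝕜} (hA : A.IsHermitian) :
    A = ∑ i, (hA.eigenvalues i : 𝕜) •
      vecMulVec ⇑(hA.eigenvectorBasis i) (star ⇑(hA.eigenvectorBasis i)) := by
  conv_lhs => rw [hA.spectral_theorem]
  ext a b
  rw [Unitary.conjStarAlgAut_apply, mul_apply, sum_apply]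
  refine Finset.sum_congr rfl fun j _ => ?_
  simp [mul_diagonal, vecMulVec_apply]
  ring

theorem IsHermitian.star_dotProduct_eigenvectorBasis_self {A : Matrix m m 𝕜}
    (hA : A.IsHermitian) (i : m) :
    star ⇑(hA.eigenvectorBasis i) ⬝ᵥ ⇑(hA.eigenvectorBasis i) = 1 := by
  rw [dotProduct_comm, ← EuclideanSpace.inner_eq_star_dotProduct]
  exact inner_self_eq_one_of_norm_eq_one (hA.eigenvectorBasis.orthonormal.1 i)

end Matrix

section DensityMatrix

variable {m : Type*} [Fintype m] [DecidableEq m]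

theorem isDensityMatrix_vecMulVec_self_star {ψ : m → ℂ} (hψ : star ψ ⬝ᵥ ψ = 1) :
    IsDensityMatrix (vecMulVec ψ (star ψ)) :=
  ⟨posSemidef_vecMulVec_self_star ψ, by rw [trace_vecMulVec, dotProduct_comm, hψ]⟩

theorem convex_setOf_isDensityMatrix : Convex ℝ {ρ : Matrix m m ℂ | IsDensityMatrix ρ} := by
  intro x hx y hy a b ha hb hab
  refine ⟨(hx.1.smul ha).add (hy.1.smul hb), ?_⟩
  rw [trace_add, trace_smul, trace_smul, hx.2, hy.2]
  simp [← Complex.ofReal_add, hab]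

theorem convexOn_setOf_isDensityMatrix_iff {f : Matrix m m ℂ → ℝ} :
    ConvexOn ℝ {ρ | IsDensityMatrix ρ} f ↔
      ∀ ρ₁ ρ₂ : Matrix m m ℂ, IsDensityMatrix ρ₁ → IsDensityMatrix ρ₂ →
        ∀ t : ℝ, 0 ≤ t → t ≤ 1 →
          f ((t : ℂ) • ρ₁ + ((1 - t : ℝ) : ℂ) • ρ₂) ≤ t * f ρ₁ + (1 - t) * f ρ₂ := by
  simp only [Complex.coe_smul]
  refine ⟨fun hf ρ₁ ρ₂ h₁ h₂ t ht₀ ht₁ => hf.2 h₁ h₂ ht₀ (sub_nonneg.2 ht₁) (by ring),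
    fun hf => ⟨convex_setOf_isDensityMatrix, fun ρ₁ h₁ ρ₂ h₂ a b ha hb hab => ?_⟩⟩
  obtain rfl : b = 1 - a := by linarith
  exact hf ρ₁ ρ₂ h₁ h₂ a ha (by linarith)

end DensityMatrix

section PureDecomposition

variable {m : Type*} [Fintype m]

structure IsPureDecomposition (ρ : Matrix m m ℂ) {k : ℕ} (p : Fin k → ℝ) (ψ : Fin k → m → ℂ) :
    Prop where
  pos : ∀ i, 0 < p i
  sum_eq_one : ∑ i, p i = 1
  unit : ∀ i, star (ψ i) ⬝ᵥ ψ i = 1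
  eq_sum : ρ = ∑ i, (p i : ℂ) • vecMulVec (ψ i) (star (ψ i))

namespace IsPureDecomposition

theorem vecMulVec_self_star {ψ : m → ℂ} (hψ : star ψ ⬝ᵥ ψ = 1) :
    IsPureDecomposition (vecMulVec ψ (star ψ)) (fun _ : Fin 1 => 1) fun _ => ψ :=
  ⟨fun _ => one_pos, by simp, fun _ => hψ, by simp⟩

theorem append {ρ₁ ρ₂ : Matrix m m ℂ} {k l : ℕ} {p : Fin k → ℝ} {q : Fin l → ℝ}
    {ψ : Fin k → m → ℂ} {φ : Fin l → m → ℂ} (h₁ : IsPureDecomposition ρ₁ p ψ)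
    (h₂ : IsPureDecomposition ρ₂ q φ) {a b : ℝ} (ha : 0 < a) (hb : 0 < b) (hab : a + b = 1) :
    IsPureDecomposition (a • ρ₁ + b • ρ₂) (Fin.append (a • p) (b • q)) (Fin.append ψ φ) where
  pos := Fin.addCases (by simpa using fun i => mul_pos ha (h₁.pos i))
    (by simpa using fun i => mul_pos hb (h₂.pos i))
  sum_eq_one := by
    simp [Fin.sum_univ_add, ← Finset.mul_sum, h₁.sum_eq_one, h₂.sum_eq_one, hab]
  unit := Fin.addCases (by simpa using h₁.unit) (by simpa using h₂.unit)
  eq_sum := by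
    simp [Fin.sum_univ_add, h₁.eq_sum, h₂.eq_sum, Finset.smul_sum, smul_smul, ← Complex.coe_smul]

theorem vecMulVec_eq {ψ : m → ℂ} (hψ : star ψ ⬝ᵥ ψ = 1) {k : ℕ} {p : Fin k → ℝ}
    {χ : Fin k → m → ℂ} (h : IsPureDecomposition (vecMulVec ψ (star ψ)) p χ) (i : Fin k) :
    vecMulVec (χ i) (star (χ i)) = vecMulVec ψ (star ψ) := by
  set c := fun j => star (χ j) ⬝ᵥ ψ
  have hsum : ∑ j, p j * ‖c j‖ ^ 2 = ∑ j, p j := by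
    have := congrArg (fun ρ => star ψ ⬝ᵥ (ρ *ᵥ ψ)) h.eq_sum
    simp only [star_dotProduct_vecMulVec_self_star_mulVec, hψ, sum_mulVec, dotProduct_sum,
      smul_mulVec, dotProduct_smul, smul_eq_mul, RCLike.ofReal_eq_complex_ofReal,
      ← Complex.ofReal_mul, ← Complex.ofReal_sum, norm_one, one_pow] at this
    rw [h.sum_eq_one]
    exact_mod_cast this.symm
  have hle : ∀ j, p j * ‖c j‖ ^ 2 ≤ p j := fun j =>
    mul_le_of_le_one_right (h.pos j).le
      (pow_le_one₀ (norm_nonneg _) (norm_star_dotProduct_le_one (h.unit j) hψ))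
  have hci : ‖c i‖ = 1 := by
    have := (Finset.sum_eq_sum_iff_of_le fun j _ => hle j).mp hsum i (Finset.mem_univ i)
    rw [mul_eq_left₀ (h.pos i).ne'] at this
    exact (pow_eq_one_iff_of_nonneg (norm_nonneg _) two_ne_zero).mp this
  calc vecMulVec (χ i) (star (χ i)) = vecMulVec (c i • χ i) (star (c i • χ i)) :=
        (vecMulVec_smul_star_smul hci _).symm
    _ = vecMulVec ψ (star ψ) := by rw [← eq_smul_of_norm_star_dotProduct_eq_one (h.unit i) hψ hci]

end IsPureDecomposition

theorem exists_isPureDecomposition_sum_smul {ι : Type*} [Fintype ι] {p : ι → ℝ}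
    {ψ : ι → m → ℂ} (hp : ∀ i, 0 ≤ p i) (hsum : ∑ i, p i = 1)
    (hψ : ∀ i, star (ψ i) ⬝ᵥ ψ i = 1) :
    ∃ (k : ℕ) (q : Fin k → ℝ) (φ : Fin k → m → ℂ),
      IsPureDecomposition (∑ i, (p i : ℂ) • vecMulVec (ψ i) (star (ψ i))) q φ := by
  classical
  set s := Finset.univ.filter fun i => p i ≠ 0
  refine ⟨s.card, fun j => p (s.equivFin.symm j), fun j => ψ (s.equivFin.symm j),
    ⟨fun j => (hp _).lt_of_ne' (Finset.mem_filter.mp (s.equivFin.symm j).2).2, ?_,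
      fun j => hψ _, ?_⟩⟩
  · rw [Equiv.sum_comp s.equivFin.symm fun i => p i, Finset.sum_coe_sort,
      Finset.sum_filter_ne_zero, hsum]
  · symm
    rw [Equiv.sum_comp s.equivFin.symm fun i => (p i : ℂ) • vecMulVec (ψ i) (star (ψ i)),
      Finset.sum_coe_sort s fun i => (p i : ℂ) • vecMulVec (ψ i) (star (ψ i)),
      Finset.sum_filter_of_ne]
    intro i _ hne hp0
    simp [hp0] at hne

theorem IsDensityMatrix.exists_isPureDecomposition [DecidableEq m] {ρ : Matrix m m ℂ}
    (hρ : IsDensityMatrix ρ) :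
    ∃ (k : ℕ) (p : Fin k → ℝ) (ψ : Fin k → m → ℂ), IsPureDecomposition ρ p ψ := by
  have hH := hρ.1.isHermitian
  rw [hH.eq_sum_eigenvalues_smul_vecMulVec]
  refine exists_isPureDecomposition_sum_smul hρ.1.eigenvalues_nonneg ?_
    hH.star_dotProduct_eigenvectorBasis_self
  simpa using congrArg Complex.re (hH.trace_eq_sum_eigenvalues.symm.trans hρ.2)

end PureDecomposition

section ConvexRoof

variable {m : Type*} [Fintype m]

def pureDecompositionValues (G : (m → ℂ) → ℝ) (ρ : Matrix m m ℂ) : Set ℝ :=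
  {t | ∃ (k : ℕ) (p : Fin k → ℝ) (ψ : Fin k → m → ℂ),
    IsPureDecomposition ρ p ψ ∧ t = ∑ i, p i * G (ψ i)}

def convexRoof (G : (m → ℂ) → ℝ) (ρ : Matrix m m ℂ) : ℝ :=
  sInf (pureDecompositionValues G ρ)

variable {G : (m → ℂ) → ℝ}

theorem bddBelow_pureDecompositionValues (hG : ∀ ψ, star ψ ⬝ᵥ ψ = 1 → 0 ≤ G ψ)
    (ρ : Matrix m m ℂ) : BddBelow (pureDecompositionValues G ρ) := by
  refine ⟨0, ?_⟩
  rintro _ ⟨k, p, ψ, h, rfl⟩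
  exact Finset.sum_nonneg fun i _ => mul_nonneg (h.pos i).le (hG _ (h.unit i))

theorem convexRoof_vecMulVec_self_star
    (hG : ∀ ψ ψ', vecMulVec ψ (star ψ) = vecMulVec ψ' (star ψ') → G ψ = G ψ')
    {ψ : m → ℂ} (hψ : star ψ ⬝ᵥ ψ = 1) : convexRoof G (vecMulVec ψ (star ψ)) = G ψ := by
  refine IsLeast.csInf_eq ⟨⟨1, _, _, .vecMulVec_self_star hψ, by simp⟩, ?_⟩
  rintro _ ⟨k, p, χ, h, rfl⟩
  simp_rw [hG _ _ (h.vecMulVec_eq hψ _), ← Finset.sum_mul, h.sum_eq_one, one_mul, le_refl]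

variable [DecidableEq m]

theorem IsDensityMatrix.pureDecompositionValues_nonempty {ρ : Matrix m m ℂ}
    (hρ : IsDensityMatrix ρ) : (pureDecompositionValues G ρ).Nonempty :=
  let ⟨k, p, ψ, h⟩ := hρ.exists_isPureDecomposition
  ⟨_, k, p, ψ, h, rfl⟩

open scoped Pointwise in
theorem convexOn_convexRoof (hG : ∀ ψ, star ψ ⬝ᵥ ψ = 1 → 0 ≤ G ψ) :
    ConvexOn ℝ {ρ | IsDensityMatrix ρ} (convexRoof G) := by
  refine ⟨convex_setOf_isDensityMatrix, fun ρ₁ h₁ ρ₂ h₂ a b ha hb hab => ?_⟩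
  rcases ha.eq_or_lt with rfl | ha
  · obtain rfl : b = 1 := by linarith
    simp
  rcases hb.eq_or_lt with rfl | hb
  · obtain rfl : a = 1 := by linarith
    simp
  have hsub : a • pureDecompositionValues G ρ₁ + b • pureDecompositionValues G ρ₂ ⊆
      pureDecompositionValues G (a • ρ₁ + b • ρ₂) := by
    rintro _ ⟨_, ⟨_, ⟨k, p, ψ, hp, rfl⟩, rfl⟩, _, ⟨_, ⟨l, q, φ, hq, rfl⟩, rfl⟩, rfl⟩
    exact ⟨_, _, _, hp.append hq ha hb hab, by simp [Fin.sum_univ_add, Finset.mul_sum, mul_assoc]⟩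
  have hne₁ := h₁.pureDecompositionValues_nonempty (G := G)
  have hne₂ := h₂.pureDecompositionValues_nonempty (G := G)
  have hbdd := bddBelow_pureDecompositionValues hG
  calc convexRoof G (a • ρ₁ + b • ρ₂)
      ≤ sInf (a • pureDecompositionValues G ρ₁ + b • pureDecompositionValues G ρ₂) :=
        csInf_le_csInf (hbdd _) (hne₁.smul_set.add hne₂.smul_set) hsub
    _ = a • convexRoof G ρ₁ + b • convexRoof G ρ₂ := by
      rw [csInf_add hne₁.smul_set ((hbdd _).smul_of_nonneg ha.le) hne₂.smul_set
        ((hbdd _).smul_of_nonneg hb.le), Real.sInf_smul_of_nonneg ha.le,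
        Real.sInf_smul_of_nonneg hb.le]
      rfl

theorem ConvexOn.le_convexRoof {f : Matrix m m ℂ → ℝ}
    (hf : ConvexOn ℝ {ρ | IsDensityMatrix ρ} f)
    (hfG : ∀ ψ, star ψ ⬝ᵥ ψ = 1 → f (vecMulVec ψ (star ψ)) = G ψ) {ρ : Matrix m m ℂ}
    (hρ : IsDensityMatrix ρ) : f ρ ≤ convexRoof G ρ := by
  refine le_csInf hρ.pureDecompositionValues_nonempty ?_
  rintro _ ⟨k, p, ψ, h, rfl⟩
  calc f ρ = f (∑ i, p i • vecMulVec (ψ i) (star (ψ i))) := by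
        simp only [h.eq_sum, Complex.coe_smul]
    _ ≤ ∑ i, p i • f (vecMulVec (ψ i) (star (ψ i))) :=
      hf.map_sum_le (fun i _ => (h.pos i).le) h.sum_eq_one
        fun i _ => isDensityMatrix_vecMulVec_self_star (h.unit i)
    _ = ∑ i, p i * G (ψ i) := by simp only [smul_eq_mul, hfG _ (h.unit _)]

end ConvexRoof

/-- **Uhlmann's theorem on convex roofs.** If G is a nonnegative function on unit vectors of ℂⁿ
depending only on the projector |ψ⟩⟨ψ|, then the convex roof 𝒢(ρ) = inf Σᵢ pᵢ G(ψᵢ) over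
pure-state decompositions of ρ is (a) convex on density matrices, (b) agrees with G on pure
states, and (c) dominates every convex function agreeing with G on pure states. -/
theorem uhlmann_convex_roof {n : ℕ} (G : (Fin n → ℂ) → ℝ)
    (hGnonneg : ∀ ψ : Fin n → ℂ, star ψ ⬝ᵥ ψ = 1 → 0 ≤ G ψ)
    (hGproj : ∀ ψ ψ' : Fin n → ℂ,
      Matrix.vecMulVec ψ (star ψ) = Matrix.vecMulVec ψ' (star ψ') → G ψ = G ψ')
    (𝒢 : Matrix (Fin n) (Fin n) ℂ → ℝ)
    (h𝒢 : ∀ ρ, 𝒢 ρ = sInf { t | ∃ (m : ℕ) (p : Fin m → ℝ) (ψ : Fin m → (Fin n → ℂ)),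
      (∀ i, 0 < p i) ∧ (∑ i, p i = 1) ∧ (∀ i, star (ψ i) ⬝ᵥ ψ i = 1) ∧
      ρ = ∑ i, (p i : ℂ) • Matrix.vecMulVec (ψ i) (star (ψ i)) ∧
      t = ∑ i, p i * G (ψ i) }) :
    (∀ ρ₁ ρ₂ : Matrix (Fin n) (Fin n) ℂ, IsDensityMatrix ρ₁ → IsDensityMatrix ρ₂ →
      ∀ t : ℝ, 0 ≤ t → t ≤ 1 →
        𝒢 ((t : ℂ) • ρ₁ + ((1 - t : ℝ) : ℂ) • ρ₂) ≤ t * 𝒢 ρ₁ + (1 - t) * 𝒢 ρ₂)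
    ∧ (∀ ψ : Fin n → ℂ, star ψ ⬝ᵥ ψ = 1 → 𝒢 (Matrix.vecMulVec ψ (star ψ)) = G ψ)
    ∧ (∀ h : Matrix (Fin n) (Fin n) ℂ → ℝ,
        (∀ ρ₁ ρ₂ : Matrix (Fin n) (Fin n) ℂ, IsDensityMatrix ρ₁ → IsDensityMatrix ρ₂ →
          ∀ t : ℝ, 0 ≤ t → t ≤ 1 →
            h ((t : ℂ) • ρ₁ + ((1 - t : ℝ) : ℂ) • ρ₂) ≤ t * h ρ₁ + (1 - t) * h ρ₂) →
        (∀ ψ : Fin n → ℂ, star ψ ⬝ᵥ ψ = 1 → h (Matrix.vecMulVec ψ (star ψ)) = G ψ) →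
        ∀ ρ, IsDensityMatrix ρ → h ρ ≤ 𝒢 ρ) := by
  obtain rfl : 𝒢 = convexRoof G := by
    funext ρ
    rw [h𝒢, convexRoof, pureDecompositionValues]
    congr 1
    ext t
    exact ⟨fun ⟨k, p, ψ, hpos, hsum, hunit, heq, ht⟩ => ⟨k, p, ψ, ⟨hpos, hsum, hunit, heq⟩, ht⟩,
      fun ⟨k, p, ψ, ⟨hpos, hsum, hunit, heq⟩, ht⟩ => ⟨k, p, ψ, hpos, hsum, hunit, heq, ht⟩⟩
  exact ⟨convexOn_setOf_isDensityMatrix_iff.mp (convexOn_convexRoof hGnonneg),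
    fun ψ hψ => convexRoof_vecMulVec_self_star hGproj hψ,
    fun h hconv hpure ρ hρ => (convexOn_setOf_isDensityMatrix_iff.mpr hconv).le_convexRoof hpure hρ⟩
end
end

section
/- For any complex matrix ρ on ℂ^{dA} ⊗ ℂ^{dB}, the universal state inverter can be written as a sum over two-qubit subspaces: ρ̃ = Σ_{i<i'} Σ_{j<j'} S_{(i,i',j,j')} · (Q_{(i,i',j,j')} ρ Q_{(i,i',j,j')})̄ · S_{(i,i',j,j')}, where the sum runs over all pairs i < i' in Fin dA and j < j' in Fin dB, X̄ denotes entrywise complex conjugation in the computational basis, Q_{(i,i',j,j')} = (|i⟩⟨i| + |i'⟩⟨i'|) ⊗ (|j⟩⟨j| + |j'⟩⟨j'|), and S_{(i,i',j,j')} = σ_y^{(ii')} ⊗ σ_y^{(jj')} with σ_y^{(kk')} = i|k'⟩⟨k| − i|k⟩⟨k'| the Pauli-y operator embedded on the span of the computational basis vectors |k⟩, |k'⟩. -/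
open Matrix Kronecker
open scoped ComplexOrder

noncomputable section

/-- Partial trace over the second factor. -/
def ptraceA {dA dB : ℕ} (ρ : Matrix (Fin dA × Fin dB) (Fin dA × Fin dB) ℂ) :
    Matrix (Fin dA) (Fin dA) ℂ :=
  Matrix.of fun i i' => ∑ j, ρ (i, j) (i', j)

/-- Partial trace over the first factor. -/
def ptraceB {dA dB : ℕ} (ρ : Matrix (Fin dA × Fin dB) (Fin dA × Fin dB) ℂ) :
    Matrix (Fin dB) (Fin dB) ℂ :=
  Matrix.of fun j j' => ∑ i, ρ (i, j) (i, j')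

/-- The universal state inverter ρ ↦ ρ̃. -/
def inverter {dA dB : ℕ} (ρ : Matrix (Fin dA × Fin dB) (Fin dA × Fin dB) ℂ) :
    Matrix (Fin dA × Fin dB) (Fin dA × Fin dB) ℂ :=
  (Matrix.trace ρᴴ) • (1 : Matrix (Fin dA × Fin dB) (Fin dA × Fin dB) ℂ)
    - (ptraceA ρ)ᴴ ⊗ₖ (1 : Matrix (Fin dB) (Fin dB) ℂ)
    - (1 : Matrix (Fin dA) (Fin dA) ℂ) ⊗ₖ (ptraceB ρ)ᴴ
    + ρᴴ

/-- The rank-one projector |ψ⟩⟨ψ|. -/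
def outer {dA dB : ℕ} (ψ : Fin dA × Fin dB → ℂ) :
    Matrix (Fin dA × Fin dB) (Fin dA × Fin dB) ℂ :=
  Matrix.vecMulVec ψ (star ψ)

/-- The pure-state tangle ⟨ψ| ρ̃_ψ |ψ⟩ with ρ_ψ = |ψ⟩⟨ψ|. -/
def pureTangle {dA dB : ℕ} (ψ : Fin dA × Fin dB → ℂ) : ℝ :=
  (star ψ ⬝ᵥ (inverter (outer ψ) *ᵥ ψ)).re

/-- The I-tangle: the infimum of Σᵢ pᵢ ⟨ψᵢ| ρ̃ᵢ |ψᵢ⟩ over pure-state decompositions of ρ. -/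
def Itangle {dA dB : ℕ} (ρ : Matrix (Fin dA × Fin dB) (Fin dA × Fin dB) ℂ) : ℝ :=
  sInf { t | ∃ (n : ℕ) (p : Fin n → ℝ) (ψ : Fin n → (Fin dA × Fin dB → ℂ)),
    (∀ i, 0 < p i) ∧ (∑ i, p i = 1) ∧ (∀ i, star (ψ i) ⬝ᵥ ψ i = 1) ∧
    ρ = ∑ i, (p i : ℂ) • outer (ψ i) ∧
    t = ∑ i, p i * pureTangle (ψ i) }


/-- The projector Q = (|i⟩⟨i| + |i'⟩⟨i'|) ⊗ (|j⟩⟨j| + |j'⟩⟨j'|). -/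
def Qproj {dA dB : ℕ} (i i' : Fin dA) (j j' : Fin dB) :
    Matrix (Fin dA × Fin dB) (Fin dA × Fin dB) ℂ :=
  (Matrix.single i i 1 + Matrix.single i' i' 1) ⊗ₖ
    (Matrix.single j j 1 + Matrix.single j' j' 1)

/-- The Pauli-y operator σ_y^{(kk')} = i|k'⟩⟨k| − i|k⟩⟨k'| embedded on span{|k⟩, |k'⟩}. -/
def sigyEmb {d : ℕ} (k k' : Fin d) : Matrix (Fin d) (Fin d) ℂ :=
  Complex.I • Matrix.single k' k 1 - Complex.I • Matrix.single k k' 1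

/-- S_{(i,i',j,j')} = σ_y^{(ii')} ⊗ σ_y^{(jj')}. -/
def Sop {dA dB : ℕ} (i i' : Fin dA) (j j' : Fin dB) :
    Matrix (Fin dA × Fin dB) (Fin dA × Fin dB) ℂ :=
  sigyEmb i i' ⊗ₖ sigyEmb j j'

/-!
Since `S Q = Q S = S` and `Q` is real, every summand equals `S ρ̄ S`. This matrix is unchanged
under `i ↔ i'` and under `j ↔ j'` (each swap only flips the sign of `S`) and vanishes when
`i = i'` or `j = j'`, so four times the sum over `i < i'`, `j < j'` is the sum over all index
quadruples. That full sum is computed entrywise from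
`Σ_{k,k'} σ^{(kk')}_{pu} σ^{(kk')}_{u'r} = 2 (δ_{pr} δ_{uu'} - δ_{pu'} δ_{ur})`, which gives
`Σ S M S = 4 (tr M • 1 - M_Aᵀ ⊗ 1 - 1 ⊗ M_Bᵀ + Mᵀ)`; for `M = ρ̄` this is `4 ρ̃`.
-/

section PairSums

variable {ι κ M : Type*} [Fintype ι] [LinearOrder ι] [Fintype κ] [LinearOrder κ]
  [AddCommMonoid M]

lemma two_nsmul_sum_sum_ite_lt (f : ι → ι → M) (hf : ∀ a b, f b a = f a b)
    (hdiag : ∀ a, f a a = 0) :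
    2 • ∑ a, ∑ b, (if a < b then f a b else 0) = ∑ a, ∑ b, f a b := by
  have hsplit : ∀ a b, f a b = (if a < b then f a b else 0) + (if b < a then f b a else 0) := by
    intro a b
    rcases lt_trichotomy a b with h | rfl | h
    · simp [h, h.not_gt]
    · simp [hdiag]
    · simp [h, h.not_gt, hf]
  have hswap :
      ∑ a, ∑ b, (if b < a then f b a else 0) = ∑ a, ∑ b, (if a < b then f a b else 0) :=
    Finset.sum_comm
  rw [two_nsmul]
  nth_rewrite 2 [← hswap]
  simp only [← Finset.sum_add_distrib, ← hsplit]

lemma four_nsmul_sum_ite_lt_and_lt (f : ι → ι → κ → κ → M)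
    (hswap_left : ∀ a a' b b', f a' a b b' = f a a' b b')
    (hswap_right : ∀ a a' b b', f a a' b' b = f a a' b b')
    (hself_left : ∀ a b b', f a a b b' = 0) (hself_right : ∀ a a' b, f a a' b b = 0) :
    4 • ∑ a, ∑ a', ∑ b, ∑ b', (if a < a' ∧ b < b' then f a a' b b' else 0) =
      ∑ a, ∑ a', ∑ b, ∑ b', f a a' b b' := by
  simp only [ite_and, Finset.sum_ite_irrel, Finset.sum_const_zero]
  calc _ = 2 • 2 • ∑ a, ∑ a',
          (if a < a' then ∑ b, ∑ b', (if b < b' then f a a' b b' else 0) else 0) := by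
        rw [← mul_nsmul]
    _ = 2 • ∑ a, ∑ a', ∑ b, ∑ b', (if b < b' then f a a' b b' else 0) := by
        rw [two_nsmul_sum_sum_ite_lt]
        · intro a a'
          simp only [hswap_left]
        · intro a
          simp [hself_left]
    _ = _ := by
        rw [Finset.smul_sum]
        refine Finset.sum_congr rfl fun a _ => ?_
        rw [Finset.smul_sum]
        refine Finset.sum_congr rfl fun a' _ => ?_
        exact two_nsmul_sum_sum_ite_lt _ (hswap_right a a') (hself_right a a')

end PairSums

section SpinFlip

variable {d dA dB : ℕ}

lemma sigyEmb_apply (k k' p u : Fin d) :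
    sigyEmb k k' p u =
      Complex.I * ((if p = k' ∧ u = k then 1 else 0) - (if p = k ∧ u = k' then 1 else 0)) := by
  simp [sigyEmb, Matrix.single_apply, mul_sub, eq_comm]

lemma sigyEmb_swap (k k' : Fin d) : sigyEmb k' k = -sigyEmb k k' :=
  (neg_sub _ _).symm

lemma sigyEmb_self (k : Fin d) : sigyEmb k k = 0 :=
  sub_self _

lemma sum_sigyEmb_apply_mul (p u : Fin d) (f : Fin d → Fin d → ℂ) :
    ∑ k, ∑ k', sigyEmb k k' p u * f k k' = Complex.I * (f u p - f p u) := by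
  simp [sigyEmb_apply, ite_and, sub_mul, mul_sub, Finset.sum_sub_distrib]

lemma sum_sigyEmb_apply_mul_sigyEmb_apply (p u u' r : Fin d) :
    ∑ k, ∑ k', sigyEmb k k' p u * sigyEmb k k' u' r =
      2 * ((if p = r ∧ u = u' then 1 else 0) - (if p = u' ∧ u = r then 1 else 0)) := by
  rw [sum_sigyEmb_apply_mul p u fun k k' => sigyEmb k k' u' r, sigyEmb_apply, sigyEmb_apply]
  ring_nf
  rw [Complex.I_sq]
  split_ifs <;> grind

lemma sigyEmb_mul_proj (k k' : Fin d) :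
    sigyEmb k k' * (Matrix.single k k 1 + Matrix.single k' k' 1) = sigyEmb k k' := by
  rcases eq_or_ne k k' with rfl | h
  · simp [sigyEmb_self]
  · simp [sigyEmb, mul_add, sub_mul, h, h.symm]
    abel

lemma proj_mul_sigyEmb (k k' : Fin d) :
    (Matrix.single k k 1 + Matrix.single k' k' 1) * sigyEmb k k' = sigyEmb k k' := by
  rcases eq_or_ne k k' with rfl | h
  · simp [sigyEmb_self]
  · simp [sigyEmb, add_mul, mul_sub, h, h.symm]

lemma Sop_mul_Qproj (i i' : Fin dA) (j j' : Fin dB) :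
    Sop i i' j j' * Qproj i i' j j' = Sop i i' j j' := by
  rw [Sop, Qproj, ← mul_kronecker_mul, sigyEmb_mul_proj, sigyEmb_mul_proj]

lemma Qproj_mul_Sop (i i' : Fin dA) (j j' : Fin dB) :
    Qproj i i' j j' * Sop i i' j j' = Sop i i' j j' := by
  rw [Sop, Qproj, ← mul_kronecker_mul, proj_mul_sigyEmb, proj_mul_sigyEmb]

lemma Qproj_map_conj (i i' : Fin dA) (j j' : Fin dB) :
    (Qproj i i' j j').map (starRingEnd ℂ) = Qproj i i' j j' := by
  ext
  simp [Qproj, Matrix.single_apply]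

lemma Sop_mul_map_conj_Qproj_mul_mul_Qproj_mul_Sop (i i' : Fin dA) (j j' : Fin dB)
    (ρ : Matrix (Fin dA × Fin dB) (Fin dA × Fin dB) ℂ) :
    Sop i i' j j' * (Qproj i i' j j' * ρ * Qproj i i' j j').map (starRingEnd ℂ) * Sop i i' j j'
      = Sop i i' j j' * ρ.map (starRingEnd ℂ) * Sop i i' j j' := by
  rw [Matrix.map_mul, Matrix.map_mul, Qproj_map_conj, ← Matrix.mul_assoc, ← Matrix.mul_assoc,
    Sop_mul_Qproj, Matrix.mul_assoc, Matrix.mul_assoc, Qproj_mul_Sop, Matrix.mul_assoc]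

lemma Sop_swap_left (i i' : Fin dA) (j j' : Fin dB) : Sop i' i j j' = -Sop i i' j j' := by
  ext
  simp [Sop, sigyEmb_swap i i']

lemma Sop_swap_right (i i' : Fin dA) (j j' : Fin dB) : Sop i i' j' j = -Sop i i' j j' := by
  ext
  simp [Sop, sigyEmb_swap j j']

lemma Sop_self_left (i : Fin dA) (j j' : Fin dB) : Sop i i j j' = 0 := by
  simp [Sop, sigyEmb_self]

lemma Sop_self_right (i i' : Fin dA) (j : Fin dB) : Sop i i' j j = 0 := by
  simp [Sop, sigyEmb_self]

open Finset in
lemma sum_Sop_mul_mul_Sop (M : Matrix (Fin dA × Fin dB) (Fin dA × Fin dB) ℂ) :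
    ∑ i, ∑ i', ∑ j, ∑ j', Sop i i' j j' * M * Sop i i' j j' =
      (4 : ℂ) • (M.trace • 1 - (ptraceA M)ᵀ ⊗ₖ 1 - 1 ⊗ₖ (ptraceB M)ᵀ + Mᵀ) := by
  ext ⟨p, q⟩ ⟨r, s⟩
  calc _ = ∑ y, ∑ x, (∑ i, ∑ i', sigyEmb i i' p x.1 * sigyEmb i i' y.1 r) *
          (∑ j, ∑ j', sigyEmb j j' q x.2 * sigyEmb j j' y.2 s) * M x y := by
        simp only [Matrix.sum_apply, Matrix.mul_apply, Sop, kroneckerMap_apply, sum_mul, mul_sum]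
        -- move the sums over the product basis outwards, then the `i, i'` sums before `j, j'`
        simp_rw [sum_comm (s := (univ : Finset (Fin dB))) (t := (univ : Finset (Fin dA × Fin dB))),
          sum_comm (s := (univ : Finset (Fin dA))) (t := (univ : Finset (Fin dA × Fin dB))),
          sum_comm (s := (univ : Finset (Fin dB))) (t := (univ : Finset (Fin dA)))]
        simp only [mul_comm, mul_left_comm]
    _ = ∑ y, ∑ x,
          2 * ((if p = r ∧ x.1 = y.1 then 1 else 0) - (if p = y.1 ∧ x.1 = r then 1 else 0)) *
          (2 * ((if q = s ∧ x.2 = y.2 then 1 else 0) - (if q = y.2 ∧ x.2 = s then 1 else 0))) *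
            M x y := by
        simp only [sum_sigyEmb_apply_mul_sigyEmb_apply]
    _ = _ := by
        simp [Fintype.sum_prod_type, ptraceA, ptraceB, Matrix.trace, Matrix.one_apply, mul_sub,
          sub_mul, ite_and, ← mul_sum]
        split_ifs <;> ring

lemma sum_Sop_mul_map_conj_mul_Sop (ρ : Matrix (Fin dA × Fin dB) (Fin dA × Fin dB) ℂ) :
    ∑ i, ∑ i', ∑ j, ∑ j', Sop i i' j j' * ρ.map (starRingEnd ℂ) * Sop i i' j j' =
      (4 : ℂ) • inverter ρ := by
  rw [sum_Sop_mul_mul_Sop, inverter]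
  ext ⟨p, q⟩ ⟨r, s⟩
  simp [ptraceA, ptraceB, Matrix.trace]

end SpinFlip

/-- The universal state inverter as a sum of two-qubit spin flips over all two-qubit
subspaces: ρ̃ = Σ_{i<i'} Σ_{j<j'} S (Q ρ Q)̄ S. -/
theorem inverter_eq_sum_spin_flips {dA dB : ℕ}
    (ρ : Matrix (Fin dA × Fin dB) (Fin dA × Fin dB) ℂ) :
    inverter ρ = ∑ i : Fin dA, ∑ i' : Fin dA, ∑ j : Fin dB, ∑ j' : Fin dB,
      if i < i' ∧ j < j' then
        Sop i i' j j' * (Qproj i i' j j' * ρ * Qproj i i' j j').map (starRingEnd ℂ)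
          * Sop i i' j j'
      else 0 := by
  simp_rw [Sop_mul_map_conj_Qproj_mul_mul_Qproj_mul_Sop]
  have h := four_nsmul_sum_ite_lt_and_lt
    (fun i i' j j' => Sop i i' j j' * ρ.map (starRingEnd ℂ) * Sop i i' j j')
    (fun a a' _ _ => by simp only [Sop_swap_left a a', neg_mul, mul_neg, neg_neg])
    (fun _ _ b b' => by simp only [Sop_swap_right _ _ b b', neg_mul, mul_neg, neg_neg])
    (fun _ _ _ => by simp only [Sop_self_left, zero_mul])
    (fun _ _ _ => by simp only [Sop_self_right, zero_mul])
  rw [sum_Sop_mul_map_conj_mul_Sop, ← Nat.cast_smul_eq_nsmul ℂ, Nat.cast_ofNat] at h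
  exact (smul_right_injective _ (four_ne_zero' ℂ) h).symm
end
end

section
/- The universal state inverter preserves positivity: if ρ is a positive semidefinite matrix on ℂ^{dA} ⊗ ℂ^{dB}, then ρ̃ is positive semidefinite. In particular, ⟨ψ| ρ̃ |ψ⟩ ≥ 0 for every vector ψ. -/
open Matrix Kronecker
open scoped ComplexOrder

noncomputable section

/-! ρ̃ is the reduction map `R Y = tr Y • 1 - Y`, composed with the transpose, applied on both
tensor factors to the entrywise conjugate `ρᴴᵀ`. The map `Y ↦ R Yᵀ` is completely positive, with
Kraus operators the antisymmetric units `Eᵢᵢ' - Eᵢ'ᵢ`: summed over all `i, i'` their congruences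
give `2 • R Yᵀ`. Hence `4 • ρ̃` is the sum of the congruences of `ρᴴᵀ` by their Kronecker products,
and `ρᴴᵀ` is positive semidefinite together with `ρ`. -/

section Congruence

variable {ι κ m m' n n' R : Type*} [CommSemiring R] [StarRing R]

theorem Matrix.sum_mul_mul_conjTranspose_apply [Fintype ι] [Fintype m]
    (K : ι → Matrix n m R) (X : Matrix m m R) (x y : n) :
    (∑ k, K k * X * (K k)ᴴ) x y = ∑ p, ∑ r, (∑ k, K k x p * star (K k y r)) * X p r := by
  calc (∑ k, K k * X * (K k)ᴴ) x y
      = ∑ k, ∑ p, ∑ r, K k x p * X p r * star (K k y r) := by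
        simp only [sum_apply, mul_apply, conjTranspose_apply, Finset.sum_mul]
        exact Finset.sum_congr rfl fun _ _ => Finset.sum_comm
    _ = ∑ p, ∑ r, ∑ k, K k x p * X p r * star (K k y r) := by
        rw [Finset.sum_comm]
        exact Finset.sum_congr rfl fun _ _ => Finset.sum_comm
    _ = _ := by simp only [Finset.sum_mul, mul_right_comm]

theorem Matrix.sum_kronecker_apply_mul_star [Fintype ι] [Fintype κ]
    (A : ι → Matrix m m' R) (B : κ → Matrix n n' R) (x y : m × n) (p r : m' × n') :
    ∑ k : ι × κ, (A k.1 ⊗ₖ B k.2) x p * star ((A k.1 ⊗ₖ B k.2) y r) =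
      (∑ i, A i x.1 p.1 * star (A i y.1 r.1)) * ∑ j, B j x.2 p.2 * star (B j y.2 r.2) := by
  rw [Finset.sum_mul_sum, ← Finset.univ_product_univ, Finset.sum_product]
  simp only [kroneckerMap_apply, star_mul']
  exact Finset.sum_congr rfl fun _ _ => Finset.sum_congr rfl fun _ _ => by ring

end Congruence

section AntisymmUnit

variable {m R : Type*} [DecidableEq m] [CommRing R] [StarRing R]

def antisymmUnit (k : m × m) : Matrix m m R := single k.1 k.2 1 - single k.2 k.1 1

theorem sum_antisymmUnit_apply_mul_star [Fintype m] (a p c r : m) :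
    ∑ k, antisymmUnit (R := R) k a p * star (antisymmUnit k c r) =
      2 * ((if a = c ∧ p = r then 1 else 0) - if a = r ∧ p = c then 1 else 0) := by
  simp only [antisymmUnit, Fintype.sum_prod_type, Matrix.sub_apply, single_apply, star_sub,
    apply_ite star, star_one, star_zero, sub_mul, mul_sub, ite_mul, one_mul, zero_mul,
    Finset.sum_sub_distrib, ite_and, Finset.sum_ite_irrel, Finset.sum_ite_eq', Finset.mem_univ,
    if_true, Finset.sum_const_zero]
  split_ifs <;> simp_all <;> ring

end AntisymmUnit

theorem inverter_eq_smul_sum_antisymmUnit_kronecker {dA dB : ℕ}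
    (ρ : Matrix (Fin dA × Fin dB) (Fin dA × Fin dB) ℂ) :
    inverter ρ = (4 : ℂ)⁻¹ • ∑ k : (Fin dA × Fin dA) × (Fin dB × Fin dB),
      (antisymmUnit k.1 ⊗ₖ antisymmUnit k.2) * ρᴴᵀ * (antisymmUnit k.1 ⊗ₖ antisymmUnit k.2)ᴴ := by
  ext ⟨a, b⟩ ⟨c, d⟩
  rw [Matrix.smul_apply, sum_mul_mul_conjTranspose_apply]
  simp only [sum_kronecker_apply_mul_star, sum_antisymmUnit_apply_mul_star]
  simp only [inverter, trace, diag_apply, conjTranspose_apply, Fintype.sum_prod_type, ptraceA,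
    ptraceB, Matrix.add_apply, Matrix.sub_apply, Matrix.smul_apply, one_apply, Prod.mk.injEq,
    ite_and, smul_eq_mul, mul_ite, mul_one, mul_zero, kroneckerMap_apply, of_apply, star_sum,
    ite_mul, one_mul, zero_mul, mul_sub, sub_mul, transpose_apply, Finset.sum_sub_distrib,
    Finset.sum_ite_irrel, Finset.sum_ite_eq, Finset.sum_ite_eq', Finset.mem_univ, if_true,
    Finset.sum_const_zero, ← Finset.mul_sum]
  split_ifs <;> ring

/-- The universal state inverter preserves positivity: if ρ is positive semidefinite
then so is ρ̃; in particular ⟨ψ| ρ̃ |ψ⟩ ≥ 0 for every vector ψ. -/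
theorem inverter_posSemidef {dA dB : ℕ}
    (ρ : Matrix (Fin dA × Fin dB) (Fin dA × Fin dB) ℂ) (hρ : ρ.PosSemidef) :
    (inverter ρ).PosSemidef ∧
      ∀ ψ : Fin dA × Fin dB → ℂ, 0 ≤ (star ψ ⬝ᵥ (inverter ρ *ᵥ ψ)).re := by
  have hpsd : (inverter ρ).PosSemidef := by
    rw [inverter_eq_smul_sum_antisymmUnit_kronecker]
    refine PosSemidef.smul (posSemidef_sum _ fun k _ => ?_) (by positivity)
    exact hρ.conjTranspose.transpose.mul_mul_conjTranspose_same _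
  exact ⟨hpsd, fun ψ => (Complex.nonneg_iff.mp (hpsd.dotProduct_mulVec_nonneg ψ)).1⟩
end
end

section
/- Let v1, v2 be orthonormal vectors in ℂ^{dA} ⊗ ℂ^{dB}, γ_{ij} = |v_i⟩⟨v_j|, and T_{ijkl} = tr(γ_{ij} (γ_{kl})~). Then the six complex numbers ¼T1221 + ½T1122 + ¼T2112, (i/4)T1221 − (i/4)T2112, ¼T1121 − ¼T2122 + ¼T1112 − ¼T1222, −¼T1221 + ½T1122 − ¼T2112, (i/4)T1121 − (i/4)T1112 + (i/4)T2122 − (i/4)T1222, and ¼T1111 − ½T1122 + ¼T2222 are all real (have zero imaginary part); hence the matrix M of the main theorem is a real symmetric 3×3 matrix. -/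
open Matrix Kronecker
open scoped ComplexOrder

noncomputable section

/-- γ_{ij} = |v_i⟩⟨v_j| (indices in `Fin 2`, so `0,1` stand for `1,2`). -/
def gam {dA dB : ℕ} (v : Fin 2 → (Fin dA × Fin dB → ℂ)) (i j : Fin 2) :
    Matrix (Fin dA × Fin dB) (Fin dA × Fin dB) ℂ :=
  Matrix.vecMulVec (v i) (star (v j))

/-- T_{ijkl} = tr(γ_{ij} (γ_{kl})~). -/
def Ttensor {dA dB : ℕ} (v : Fin 2 → (Fin dA × Fin dB → ℂ)) (i j k l : Fin 2) : ℂ :=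
  Matrix.trace (gam v i j * inverter (gam v k l))

lemma ptraceA_conjT {dA dB : ℕ} (ρ : Matrix (Fin dA × Fin dB) (Fin dA × Fin dB) ℂ) :
    ptraceA ρᴴ = (ptraceA ρ)ᴴ := by
  ext i i'
  simp [ptraceA, Matrix.conjTranspose_apply, map_sum]

lemma ptraceB_conjT {dA dB : ℕ} (ρ : Matrix (Fin dA × Fin dB) (Fin dA × Fin dB) ℂ) :
    ptraceB ρᴴ = (ptraceB ρ)ᴴ := by
  ext j j'
  simp [ptraceB, Matrix.conjTranspose_apply, map_sum]

lemma inverter_conjT {dA dB : ℕ} (ρ : Matrix (Fin dA × Fin dB) (Fin dA × Fin dB) ℂ) :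
    (inverter ρ)ᴴ = inverter ρᴴ := by
  simp only [inverter, conjTranspose_add, conjTranspose_sub, conjTranspose_smul,
    conjTranspose_conjTranspose, ptraceA_conjT, ptraceB_conjT, Matrix.trace_conjTranspose]
  congr 1
  congr 1
  · congr 1
    · simp [Matrix.conjTranspose_one]
    · ext ⟨a, b⟩ ⟨c, d⟩
      simp [Matrix.kroneckerMap_apply, Matrix.conjTranspose_apply, Matrix.one_apply,
        mul_comm, apply_ite (starRingEnd ℂ), eq_comm]
  · ext ⟨a, b⟩ ⟨c, d⟩
    simp [Matrix.kroneckerMap_apply, Matrix.conjTranspose_apply, Matrix.one_apply,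
      mul_comm, apply_ite (starRingEnd ℂ), eq_comm]

lemma gam_conjT {dA dB : ℕ} (v : Fin 2 → (Fin dA × Fin dB → ℂ)) (i j : Fin 2) :
    (gam v i j)ᴴ = gam v j i := by
  ext x y
  simp [gam, Matrix.conjTranspose_apply, Matrix.vecMulVec_apply, mul_comm]

lemma Ttensor_conj {dA dB : ℕ} (v : Fin 2 → (Fin dA × Fin dB → ℂ)) (i j k l : Fin 2) :
    (starRingEnd ℂ) (Ttensor v i j k l) = Ttensor v j i l k := by
  unfold Ttensor
  rw [starRingEnd_apply, ← Matrix.trace_conjTranspose, Matrix.conjTranspose_mul, inverter_conjT, gam_conjT,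
    gam_conjT, Matrix.trace_mul_comm]

/-- The six independent entries of the matrix M are real, so M is a real symmetric
3×3 matrix. (Indices shifted from `{1,2}` in the paper to `{0,1}`.) -/
theorem M_entries_real {dA dB : ℕ} (v : Fin 2 → (Fin dA × Fin dB → ℂ))
    (hortho : ∀ i j, star (v i) ⬝ᵥ v j = if i = j then 1 else 0) :
    (Ttensor v 0 1 1 0 / 4 + Ttensor v 0 0 1 1 / 2 + Ttensor v 1 0 0 1 / 4).im = 0 ∧
    (Complex.I / 4 * Ttensor v 0 1 1 0 - Complex.I / 4 * Ttensor v 1 0 0 1).im = 0 ∧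
    (Ttensor v 0 0 1 0 / 4 - Ttensor v 1 0 1 1 / 4 + Ttensor v 0 0 0 1 / 4
      - Ttensor v 0 1 1 1 / 4).im = 0 ∧
    (-(Ttensor v 0 1 1 0 / 4) + Ttensor v 0 0 1 1 / 2 - Ttensor v 1 0 0 1 / 4).im = 0 ∧
    (Complex.I / 4 * Ttensor v 0 0 1 0 - Complex.I / 4 * Ttensor v 0 0 0 1
      + Complex.I / 4 * Ttensor v 1 0 1 1 - Complex.I / 4 * Ttensor v 0 1 1 1).im = 0 ∧
    (Ttensor v 0 0 0 0 / 4 - Ttensor v 0 0 1 1 / 2 + Ttensor v 1 1 1 1 / 4).im = 0 := by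
  have h : ∀ i j k l, (starRingEnd ℂ) (Ttensor v i j k l) = Ttensor v j i l k :=
    Ttensor_conj v
  refine ⟨?_, ?_, ?_, ?_, ?_, ?_⟩ <;>
  · rw [← Complex.conj_eq_iff_im]
    simp only [map_add, map_sub, _root_.map_mul, map_div₀, map_neg, Complex.conj_I,
      map_ofNat, h]
    try ring
end
end

section
/- Let M be a real symmetric 3×3 matrix, L ∈ ℝ³, K ∈ ℝ, and define f : ℝ³ → ℝ by f(r) = K + ⟨L, r⟩ + ⟨r, M r⟩. Let λ_min be the smallest eigenvalue of M and define g(r) = f(r) + λ_min (1 − |r|²). Then: (a) g is convex on ℝ³; (b) g agrees with f on the unit sphere {r : |r| = 1}; and (c) for every function h that is convex on the closed unit ball {r : |r| ≤ 1} and agrees with f on the unit sphere, one has h(r) ≤ g(r) for all r in the closed unit ball. That is, g is the largest convex function on the closed unit ball agreeing with f on the unit sphere. -/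
/-!
With `A = M - λ_min • 1`, which is positive semidefinite, `g r = K + λ_min + ⟨L, r⟩ + ⟨r, A r⟩`
is convex. If `w` is an eigenvector for `λ_min`, then `A w = 0`, so `g` is affine on every line
in direction `w`. The line through a point `r` of the ball meets the sphere at two points on
either side of `r`; there `h = f = g`, and convexity of `h` against affinity of `g` on the
chord gives `h r ≤ g r`.
-/

open Matrix

namespace Matrix

variable {n : Type*} [Fintype n]

theorem dotProduct_mulVec_add_smul_of_mulVec_eq_zero {R : Type*} [CommRing R]
    {A : Matrix n n R} (hA : A.IsSymm) {w : n → R} (hw : A *ᵥ w = 0) (r : n → R) (t : R) :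
    (r + t • w) ⬝ᵥ (A *ᵥ (r + t • w)) = r ⬝ᵥ (A *ᵥ r) := by
  have hwA : w ⬝ᵥ (A *ᵥ r) = 0 := by
    rw [dotProduct_mulVec, ← mulVec_transpose, hA.eq, dotProduct_comm, hw, dotProduct_zero]
  simp [mulVec_add, mulVec_smul, hw, add_dotProduct, hwA]

theorem PosSemidef.convexOn_add_dotProduct_mulVec {A : Matrix n n ℝ} (hA : A.PosSemidef)
    (c : ℝ) (L : n → ℝ) : ConvexOn ℝ Set.univ fun x => c + L ⬝ᵥ x + x ⬝ᵥ (A *ᵥ x) := by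
  refine ⟨convex_univ, fun x _ y _ a b ha hb hab => ?_⟩
  obtain rfl : b = 1 - a := by linarith
  have hxy : 0 ≤ (x - y) ⬝ᵥ (A *ᵥ (x - y)) := by
    simpa using hA.dotProduct_mulVec_nonneg (x - y)
  simp only [mulVec_add, mulVec_smul, mulVec_sub, dotProduct_add, add_dotProduct,
    dotProduct_sub, sub_dotProduct, smul_dotProduct, dotProduct_smul, smul_eq_mul] at hxy ⊢
  nlinarith [mul_nonneg ha hb]

variable [DecidableEq n]

theorem dotProduct_sub_smul_one_mulVec (A : Matrix n n ℝ) (lam : ℝ) (x : n → ℝ) :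
    x ⬝ᵥ ((A - lam • 1) *ᵥ x) = x ⬝ᵥ (A *ᵥ x) - lam * (x ⬝ᵥ x) := by
  simp [sub_mulVec, smul_mulVec, dotProduct_sub]

theorem IsSymm.posSemidef_sub_smul_one {M : Matrix n n ℝ} (hM : M.IsSymm) {lam : ℝ}
    (hlam : lam ∈ lowerBounds {μ : ℝ | ∃ w : n → ℝ, w ≠ 0 ∧ M *ᵥ w = μ • w}) :
    (M - lam • 1).PosSemidef := by
  have hA : (M - lam • (1 : Matrix n n ℝ)).IsHermitian := by
    rw [IsHermitian, conjTranspose_eq_transpose_of_trivial, transpose_sub, transpose_smul,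
      transpose_one, hM.eq]
  refine hA.posSemidef_iff_eigenvalues_nonneg.mpr fun i => ?_
  have hv : ⇑(hA.eigenvectorBasis i) ≠ (0 : n → ℝ) := fun h0 =>
    hA.eigenvectorBasis.orthonormal.ne_zero i (by simpa using congrArg (WithLp.toLp 2) h0)
  have hev := hA.mulVec_eigenvectorBasis i
  rw [sub_mulVec, smul_mulVec, one_mulVec, sub_eq_iff_eq_add, ← add_smul] at hev
  have := hlam ⟨_, hv, hev⟩
  show (0 : ℝ) ≤ hA.eigenvalues i
  linarith

end Matrix

theorem exists_unit_sphere_points_on_line {n : Type*} [Fintype n] {r w : n → ℝ}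
    (hr : r ⬝ᵥ r ≤ 1) (hw : w ≠ 0) :
    ∃ s t : ℝ, s ≤ 0 ∧ 0 ≤ t ∧ (r + s • w) ⬝ᵥ (r + s • w) = 1 ∧
      (r + t • w) ⬝ᵥ (r + t • w) = 1 := by
  have ha : 0 < w ⬝ᵥ w := lt_of_le_of_ne (Finset.sum_nonneg fun i _ => mul_self_nonneg (w i))
    (Ne.symm (dotProduct_self_eq_zero.not.mpr hw))
  have hexpand : ∀ τ : ℝ, (r + τ • w) ⬝ᵥ (r + τ • w) =
      r ⬝ᵥ r + 2 * τ * (r ⬝ᵥ w) + τ ^ 2 * (w ⬝ᵥ w) := by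
    intro τ
    simp only [dotProduct_add, add_dotProduct, smul_dotProduct, dotProduct_smul, smul_eq_mul,
      dotProduct_comm w r]
    ring
  -- the two roots of the quadratic `τ ↦ |r + τ w|² - 1`, whose discriminant dominates `(r ⬝ᵥ w)²`
  set D := (r ⬝ᵥ w) ^ 2 + (w ⬝ᵥ w) * (1 - r ⬝ᵥ r)
  have hD : (r ⬝ᵥ w) ^ 2 ≤ D := by nlinarith
  have hc : |r ⬝ᵥ w| ≤ √D := Real.abs_le_sqrt hD
  have hroot : ∀ σ : ℝ, σ ^ 2 = D →
      (r + ((-(r ⬝ᵥ w) + σ) / (w ⬝ᵥ w)) • w) ⬝ᵥ (r + ((-(r ⬝ᵥ w) + σ) / (w ⬝ᵥ w)) • w) = 1 := by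
    intro σ hσ
    rw [hexpand]
    field_simp
    linear_combination hσ
  refine ⟨(-(r ⬝ᵥ w) + -√D) / (w ⬝ᵥ w), (-(r ⬝ᵥ w) + √D) / (w ⬝ᵥ w), ?_, ?_,
    hroot _ (by rw [neg_sq, Real.sq_sqrt ((sq_nonneg _).trans hD)]),
    hroot _ (Real.sq_sqrt ((sq_nonneg _).trans hD))⟩
  · exact div_nonpos_of_nonpos_of_nonneg (by linarith [neg_abs_le (r ⬝ᵥ w)]) ha.le
  · exact div_nonneg (by linarith [le_abs_self (r ⬝ᵥ w)]) ha.le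

theorem ConvexOn.le_of_le_on_unit_sphere {n : Type*} [Fintype n] {h g : (n → ℝ) → ℝ}
    (hh : ConvexOn ℝ {x : n → ℝ | x ⬝ᵥ x ≤ 1} h) (hle : ∀ x : n → ℝ, x ⬝ᵥ x = 1 → h x ≤ g x)
    {r w : n → ℝ} (hr : r ⬝ᵥ r ≤ 1) (hw : w ≠ 0) {ℓ : ℝ}
    (hg : ∀ τ : ℝ, g (r + τ • w) = g r + τ * ℓ) : h r ≤ g r := by
  obtain ⟨s, t, hs, ht, hps, hpt⟩ := exists_unit_sphere_points_on_line hr hw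
  have h0 : (0 : ℝ) ∈ segment ℝ s t := by rw [segment_eq_Icc (hs.trans ht)]; exact ⟨hs, ht⟩
  obtain ⟨a, b, ha, hb, hab, hst⟩ := h0
  rw [smul_eq_mul, smul_eq_mul] at hst
  have hcomb : a • (r + s • w) + b • (r + t • w) = r := by
    calc a • (r + s • w) + b • (r + t • w) = (a + b) • r + (a * s + b * t) • w := by module
      _ = r := by rw [hab, hst, one_smul, zero_smul, add_zero]
  calc h r = h (a • (r + s • w) + b • (r + t • w)) := by rw [hcomb]
    _ ≤ a • h (r + s • w) + b • h (r + t • w) := hh.2 hps.le hpt.le ha hb hab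
    _ ≤ a • g (r + s • w) + b • g (r + t • w) := by
      gcongr
      exacts [hle _ hps, hle _ hpt]
    _ = g r := by
      rw [hg, hg, smul_eq_mul, smul_eq_mul]
      linear_combination g r * hab + ℓ * hst

/-- Largest-convex-extension lemma: for a quadratic form f(r) = K + ⟨L,r⟩ + ⟨r,Mr⟩ on ℝ³
with M real symmetric, the function g(r) = f(r) + λ_min(1 − |r|²), with λ_min the smallest
eigenvalue of M, is (a) convex on ℝ³, (b) agrees with f on the unit sphere, and (c) is the
largest function convex on the closed unit ball agreeing with f on the unit sphere. -/
theorem largest_convex_quadratic (M : Matrix (Fin 3) (Fin 3) ℝ) (hM : M.IsSymm)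
    (L : Fin 3 → ℝ) (K : ℝ) (f g : (Fin 3 → ℝ) → ℝ)
    (hf : ∀ r, f r = K + L ⬝ᵥ r + r ⬝ᵥ (M *ᵥ r))
    (lam : ℝ) (hlam : IsLeast {μ : ℝ | ∃ w : Fin 3 → ℝ, w ≠ 0 ∧ M *ᵥ w = μ • w} lam)
    (hg : ∀ r, g r = f r + lam * (1 - r ⬝ᵥ r)) :
    ConvexOn ℝ Set.univ g ∧
    (∀ r : Fin 3 → ℝ, r ⬝ᵥ r = 1 → g r = f r) ∧
    (∀ h : (Fin 3 → ℝ) → ℝ,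
      ConvexOn ℝ {r : Fin 3 → ℝ | r ⬝ᵥ r ≤ 1} h →
      (∀ r : Fin 3 → ℝ, r ⬝ᵥ r = 1 → h r = f r) →
      ∀ r : Fin 3 → ℝ, r ⬝ᵥ r ≤ 1 → h r ≤ g r) := by
  set A := M - lam • (1 : Matrix (Fin 3) (Fin 3) ℝ)
  have hgA : g = fun r => (K + lam) + L ⬝ᵥ r + r ⬝ᵥ (A *ᵥ r) := by
    funext r
    rw [hg, hf, dotProduct_sub_smul_one_mulVec]
    ring
  have hgf : ∀ r : Fin 3 → ℝ, r ⬝ᵥ r = 1 → g r = f r := fun r hr => by rw [hg, hr]; ring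
  refine ⟨hgA ▸ (hM.posSemidef_sub_smul_one hlam.2).convexOn_add_dotProduct_mulVec _ _, hgf,
    fun h hh hhf r hr => ?_⟩
  obtain ⟨w, hw, hMw⟩ := hlam.1
  have hAw : A *ᵥ w = 0 := by simp [A, sub_mulVec, smul_mulVec, hMw]
  have hAsymm : A.IsSymm := hM.sub ((isSymm_one).smul lam)
  refine hh.le_of_le_on_unit_sphere (fun x hx => ((hhf x hx).trans (hgf x hx).symm).le) hr hw
    (ℓ := L ⬝ᵥ w) fun τ => ?_
  simp only [hgA, dotProduct_mulVec_add_smul_of_mulVec_eq_zero hAsymm hAw, dotProduct_add,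
    dotProduct_smul, smul_eq_mul]
  ring
end

section
/- The function 𝓔 : [0,1] → ℝ defined by 𝓔(x) = H(1/2 + (1/2)√(1 − x)), where H(y) = −y log₂ y − (1−y) log₂(1−y) is the binary entropy (with 0 log₂ 0 = 0), is monotone nondecreasing and concave on [0,1]. -/
noncomputable section

/-- Binary entropy H(y) = −y log₂ y − (1−y) log₂ (1−y) (with 0 log₂ 0 = 0, which is
automatic since `Real.logb 2 0 = 0`). -/
def binEnt (y : ℝ) : ℝ := -(y * Real.logb 2 y) - (1 - y) * Real.logb 2 (1 - y)

/-- 𝓔(x) = H(1/2 + (1/2)√(1 − x)). -/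
def Efun (x : ℝ) : ℝ := binEnt (1 / 2 + (1 / 2) * Real.sqrt (1 - x))

/-!
With `s = √(1 - x)` the chain rule gives `𝓔'(x) = (log (1 + s) - log (1 - s)) / (4 s log 2)`.
The power series of `log (1 + s) - log (1 - s)` shows that `(log (1 + s) - log (1 - s)) / s`
is a series in `s²` with positive coefficients, hence nonnegative and nondecreasing in `s`.
Since `s` decreases with `x`, the derivative `𝓔'` is nonnegative and nonincreasing on `(0, 1)`.
-/

open Real Set

lemma binEnt_eq_binEntropy_div (y : ℝ) : binEnt y = binEntropy y / log 2 := by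
  simp only [binEnt, binEntropy, logb, log_inv]
  ring

lemma Efun_eq_binEntropy_div (x : ℝ) :
    Efun x = binEntropy (1 / 2 + 1 / 2 * √(1 - x)) / log 2 :=
  binEnt_eq_binEntropy_div _

lemma continuous_Efun : Continuous Efun := by
  simp only [funext Efun_eq_binEntropy_div]
  fun_prop

lemma hasSum_log_sub_log_div {s : ℝ} (h : |s| < 1) (hs : s ≠ 0) :
    HasSum (fun k : ℕ => 2 / (2 * k + 1) * (s ^ 2) ^ k) ((log (1 + s) - log (1 - s)) / s) := by
  have hterm (k : ℕ) :
      2 * (1 / (2 * k + 1)) * s ^ (2 * k + 1) / s = 2 / (2 * k + 1) * (s ^ 2) ^ k := by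
    rw [pow_succ, ← pow_mul]
    field_simp
  simpa only [hterm] using (hasSum_log_sub_log_of_abs_lt_one h).div_const s

lemma log_sub_log_div_nonneg {s : ℝ} (h : |s| < 1) : 0 ≤ (log (1 + s) - log (1 - s)) / s := by
  rcases eq_or_ne s 0 with rfl | hs
  · simp
  · exact (hasSum_log_sub_log_div h hs).nonneg fun k => by positivity

lemma monotoneOn_log_sub_log_div :
    MonotoneOn (fun s => (log (1 + s) - log (1 - s)) / s) (Ioo 0 1) := by
  intro a ⟨ha0, ha1⟩ b ⟨hb0, hb1⟩ hab
  have habs {t : ℝ} (h0 : 0 < t) (h1 : t < 1) : |t| < 1 := by rwa [abs_of_pos h0]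
  refine hasSum_le (fun k => ?_) (hasSum_log_sub_log_div (habs ha0 ha1) ha0.ne')
    (hasSum_log_sub_log_div (habs hb0 hb1) hb0.ne')
  gcongr

lemma sqrt_one_sub_mem_Ioo {x : ℝ} (hx : x ∈ Ioo 0 1) : √(1 - x) ∈ Ioo 0 1 :=
  ⟨sqrt_pos.mpr (by linarith [hx.2]), (sqrt_lt' one_pos).mpr (by linarith [hx.1])⟩

lemma hasDerivAt_Efun {x : ℝ} (hx : x ∈ Ioo 0 1) :
    HasDerivAt Efun
      ((log (1 + √(1 - x)) - log (1 - √(1 - x))) / √(1 - x) / (4 * log 2)) x := by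
  obtain ⟨hs0, hs1⟩ := sqrt_one_sub_mem_Ioo hx
  set s := √(1 - x)
  have hp : HasDerivAt (fun x => 1 / 2 + 1 / 2 * √(1 - x)) (1 / 2 * (1 / (2 * s) * -1)) x :=
    (((hasDerivAt_sqrt (by linarith [hx.2])).comp x
      ((hasDerivAt_id' x).const_sub 1)).const_mul _).const_add _
  have hH := (hasDerivAt_binEntropy (p := 1 / 2 + 1 / 2 * s) (by linarith) (by linarith)).comp x hp
  rw [funext Efun_eq_binEntropy_div]
  refine (hH.div_const (log 2)).congr_deriv ?_
  rw [show 1 - (1 / 2 + 1 / 2 * s) = (1 - s) / 2 by ring,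
    show 1 / 2 + 1 / 2 * s = (1 + s) / 2 by ring,
    log_div (by linarith) two_ne_zero, log_div (by linarith) two_ne_zero]
  field_simp
  ring

lemma deriv_Efun_nonneg {x : ℝ} (hx : x ∈ Ioo 0 1) : 0 ≤ deriv Efun x := by
  rw [(hasDerivAt_Efun hx).deriv]
  obtain ⟨hs0, hs1⟩ := sqrt_one_sub_mem_Ioo hx
  have := log_sub_log_div_nonneg (abs_lt.mpr ⟨by linarith, hs1⟩)
  positivity

lemma antitoneOn_deriv_Efun : AntitoneOn (deriv Efun) (Ioo 0 1) := by
  intro a ha b hb hab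
  rw [(hasDerivAt_Efun ha).deriv, (hasDerivAt_Efun hb).deriv]
  gcongr ?_ / _
  exact monotoneOn_log_sub_log_div (sqrt_one_sub_mem_Ioo hb) (sqrt_one_sub_mem_Ioo ha)
    (sqrt_le_sqrt (by linarith))

/-- The function 𝓔(x) = H(1/2 + (1/2)√(1 − x)) is monotone nondecreasing and concave
on [0,1]. -/
theorem Efun_monotone_concave :
    MonotoneOn Efun (Set.Icc (0 : ℝ) 1) ∧ ConcaveOn ℝ (Set.Icc (0 : ℝ) 1) Efun := by
  have hdiff : DifferentiableOn ℝ Efun (interior (Icc 0 1)) := by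
    rw [interior_Icc]
    exact fun x hx => (hasDerivAt_Efun hx).differentiableAt.differentiableWithinAt
  refine ⟨monotoneOn_of_deriv_nonneg (convex_Icc 0 1) continuous_Efun.continuousOn hdiff ?_,
    AntitoneOn.concaveOn_of_deriv (convex_Icc 0 1) continuous_Efun.continuousOn hdiff ?_⟩
  · rw [interior_Icc]
    exact fun x hx => deriv_Efun_nonneg hx
  · rw [interior_Icc]
    exact antitoneOn_deriv_Efun
end
end

section
/- Let ψ be a unit vector in ℂ² ⊗ ℂ^{d} (a qubit and a qudit), ρ = |ψ⟩⟨ψ|, and ρ_A the partial trace of ρ over the second factor. Then the entanglement of formation of the pure state equals 𝓔 applied to its I-tangle: S(ρ_A) = H(1/2 + (1/2)√(1 − ⟨ψ| ρ̃ |ψ⟩)), where S is the von Neumann entropy and H the binary entropy. -/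
open Matrix Kronecker
open scoped ComplexOrder

noncomputable section

/-- Von Neumann entropy S(σ) = −Σ_k λ_k log₂ λ_k of a Hermitian matrix (junk value 0
on non-Hermitian matrices). -/
def vnEntropy {n : ℕ} (σ : Matrix (Fin n) (Fin n) ℂ) : ℝ :=
  if h : σ.IsHermitian then ∑ k, -(h.eigenvalues k * Real.logb 2 (h.eigenvalues k)) else 0

/-!
For ρ = |ψ⟩⟨ψ| with coefficient matrix M, the reduced states ρ_A = M Mᴴ and ρ_B = Mᵀ Mᵀᴴ have the
same purity, and ρ² = ρ, so ⟨ψ| ρ̃ |ψ⟩ = tr (ρ̃ ρ) = 2 (1 - tr ρ_A²). For a qubit,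
tr ρ_A² = (tr ρ_A)² - 2 det ρ_A, so the tangle is 4 λ₀ λ₁ for the eigenvalues λ₀ + λ₁ = 1 of ρ_A.
Then √(1 - 4 λ₀ λ₁) = |λ₀ - λ₁|, so 1/2 + 1/2 √(1 - tangle) = max λ₀ λ₁, where H takes the
value S(ρ_A).
-/

namespace Matrix

theorem trace_mul_self_fin_two {R : Type*} [CommRing R] (A : Matrix (Fin 2) (Fin 2) R) :
    trace (A * A) = trace A ^ 2 - 2 * det A := by
  simp only [trace_fin_two, det_fin_two, mul_apply, Fin.sum_univ_two]
  ring

end Matrix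

section PartialTrace

variable {dA dB : ℕ}

theorem trace_kronecker_one_mul (X : Matrix (Fin dA) (Fin dA) ℂ)
    (ρ : Matrix (Fin dA × Fin dB) (Fin dA × Fin dB) ℂ) :
    trace ((X ⊗ₖ (1 : Matrix (Fin dB) (Fin dB) ℂ)) * ρ) = trace (X * ptraceA ρ) := by
  simp only [trace, diag, mul_apply, ptraceA, of_apply, Fintype.sum_prod_type, kroneckerMap_apply,
    one_apply, mul_ite, mul_one, mul_zero, ite_mul, zero_mul, Finset.sum_ite_eq,
    Finset.mem_univ, if_true, Finset.mul_sum]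
  exact Finset.sum_congr rfl fun i _ => Finset.sum_comm

theorem trace_one_kronecker_mul (Y : Matrix (Fin dB) (Fin dB) ℂ)
    (ρ : Matrix (Fin dA × Fin dB) (Fin dA × Fin dB) ℂ) :
    trace (((1 : Matrix (Fin dA) (Fin dA) ℂ) ⊗ₖ Y) * ρ) = trace (Y * ptraceB ρ) := by
  simp only [trace, diag, mul_apply, ptraceB, of_apply, Fintype.sum_prod_type, kroneckerMap_apply,
    one_apply, ite_mul, one_mul, zero_mul, Finset.sum_ite_eq,
    Finset.mem_univ, if_true, Finset.mul_sum, Finset.sum_ite_irrel, Finset.sum_const_zero]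
  exact Finset.sum_comm.trans (Finset.sum_congr rfl fun _ _ => Finset.sum_comm)

theorem trace_ptraceA (ρ : Matrix (Fin dA × Fin dB) (Fin dA × Fin dB) ℂ) :
    trace (ptraceA ρ) = trace ρ := by
  simp [trace, ptraceA, Fintype.sum_prod_type]

theorem trace_inverter_mul (ρ : Matrix (Fin dA × Fin dB) (Fin dA × Fin dB) ℂ) :
    trace (inverter ρ * ρ) = trace ρᴴ * trace ρ - trace ((ptraceA ρ)ᴴ * ptraceA ρ)
      - trace ((ptraceB ρ)ᴴ * ptraceB ρ) + trace (ρᴴ * ρ) := by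
  simp only [inverter, add_mul, sub_mul, smul_mul, one_mul, trace_add, trace_sub, trace_smul,
    smul_eq_mul, trace_kronecker_one_mul, trace_one_kronecker_mul]

end PartialTrace

section PureState

variable {dA dB : ℕ} (ψ : Fin dA × Fin dB → ℂ)

def coeffMatrix : Matrix (Fin dA) (Fin dB) ℂ := of fun i j => ψ (i, j)

theorem ptraceA_outer : ptraceA (outer ψ) = coeffMatrix ψ * (coeffMatrix ψ)ᴴ := by
  ext i i'
  simp [ptraceA, outer, coeffMatrix, mul_apply, vecMulVec_apply]

theorem ptraceB_outer : ptraceB (outer ψ) = (coeffMatrix ψ)ᵀ * (coeffMatrix ψ)ᵀᴴ := by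
  ext j j'
  simp [ptraceB, outer, coeffMatrix, mul_apply, vecMulVec_apply]

theorem isHermitian_ptraceA_outer : (ptraceA (outer ψ)).IsHermitian := by
  rw [ptraceA_outer]
  exact isHermitian_mul_conjTranspose_self _

theorem isHermitian_ptraceB_outer : (ptraceB (outer ψ)).IsHermitian := by
  rw [ptraceB_outer]
  exact isHermitian_mul_conjTranspose_self _

theorem trace_ptraceB_outer_mul_self :
    trace (ptraceB (outer ψ) * ptraceB (outer ψ)) =
      trace (ptraceA (outer ψ) * ptraceA (outer ψ)) := by
  rw [ptraceA_outer, ptraceB_outer, ← trace_transpose,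
    conjTranspose_transpose_eq_transpose_conjTranspose]
  simp only [transpose_mul, transpose_transpose, Matrix.mul_assoc]
  rw [trace_mul_comm]
  simp only [Matrix.mul_assoc]

theorem conjTranspose_outer : (outer ψ)ᴴ = outer ψ := by
  simp [outer, conjTranspose_vecMulVec]

theorem trace_outer : trace (outer ψ) = star ψ ⬝ᵥ ψ := by
  rw [outer, trace_vecMulVec, dotProduct_comm]

theorem outer_mul_outer : outer ψ * outer ψ = (star ψ ⬝ᵥ ψ) • outer ψ := by
  rw [outer, vecMulVec_mul_vecMulVec, vecMulVec_smul]

theorem star_dotProduct_mulVec_eq_trace_mul_outer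
    (A : Matrix (Fin dA × Fin dB) (Fin dA × Fin dB) ℂ) :
    star ψ ⬝ᵥ (A *ᵥ ψ) = trace (A * outer ψ) := by
  rw [outer, mul_vecMulVec, trace_vecMulVec, dotProduct_comm]

variable {ψ}

theorem star_dotProduct_inverter_outer_mulVec (hψ : star ψ ⬝ᵥ ψ = 1) :
    star ψ ⬝ᵥ (inverter (outer ψ) *ᵥ ψ) =
      2 * (1 - trace (ptraceA (outer ψ) * ptraceA (outer ψ))) := by
  rw [star_dotProduct_mulVec_eq_trace_mul_outer, trace_inverter_mul, conjTranspose_outer,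
    (isHermitian_ptraceA_outer ψ).eq, (isHermitian_ptraceB_outer ψ).eq,
    trace_ptraceB_outer_mul_self, outer_mul_outer, hψ, one_smul, trace_outer, hψ]
  ring

end PureState

theorem star_dotProduct_inverter_outer_mulVec_eq_four_mul_det {d : ℕ} {ψ : Fin 2 × Fin d → ℂ}
    (hψ : star ψ ⬝ᵥ ψ = 1) :
    star ψ ⬝ᵥ (inverter (outer ψ) *ᵥ ψ) = 4 * det (ptraceA (outer ψ)) := by
  rw [star_dotProduct_inverter_outer_mulVec hψ, trace_mul_self_fin_two, trace_ptraceA, trace_outer,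
    hψ]
  ring

theorem binEnt_of_add_eq_one {a b : ℝ} (hab : a + b = 1) :
    binEnt a = -(a * Real.logb 2 a) + -(b * Real.logb 2 b) := by
  rw [binEnt, ← hab, add_sub_cancel_left]
  ring

theorem binEnt_half_add_half_sqrt_one_sub_four_mul {a b : ℝ} (hab : a + b = 1) :
    binEnt (1 / 2 + 1 / 2 * √(1 - 4 * (a * b))) =
      -(a * Real.logb 2 a) + -(b * Real.logb 2 b) := by
  have hsq : 1 - 4 * (a * b) = (a - b) ^ 2 := by linear_combination (-(a + b + 1)) * hab
  rw [hsq, Real.sqrt_sq_eq_abs]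
  rcases le_total b a with hba | hab'
  · rw [abs_of_nonneg (sub_nonneg.2 hba), show 1 / 2 + 1 / 2 * (a - b) = a by linarith,
      binEnt_of_add_eq_one hab]
  · rw [abs_of_nonpos (sub_nonpos.2 hab'), show 1 / 2 + 1 / 2 * -(a - b) = b by linarith,
      binEnt_of_add_eq_one (b := a) (by linarith), add_comm]

/-- For a pure state ψ of a qubit and a qudit, the entanglement of formation equals 𝓔 of
its I-tangle: S(ρ_A) = H(1/2 + (1/2)√(1 − ⟨ψ| ρ̃ |ψ⟩)). -/
theorem pure_eof_eq_E_of_tangle {d : ℕ} (ψ : Fin 2 × Fin d → ℂ)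
    (hψ : star ψ ⬝ᵥ ψ = 1) :
    vnEntropy (ptraceA (outer ψ)) =
      binEnt (1 / 2 + (1 / 2) * Real.sqrt (1 - pureTangle ψ)) := by
  have hA := isHermitian_ptraceA_outer ψ
  have hsum : hA.eigenvalues 0 + hA.eigenvalues 1 = 1 := by
    have h := hA.trace_eq_sum_eigenvalues
    rw [trace_ptraceA, trace_outer, hψ, Fin.sum_univ_two] at h
    simpa using (congrArg Complex.re h).symm
  have htangle : pureTangle ψ = 4 * (hA.eigenvalues 0 * hA.eigenvalues 1) := by
    rw [pureTangle, star_dotProduct_inverter_outer_mulVec_eq_four_mul_det hψ,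
      hA.det_eq_prod_eigenvalues, Fin.prod_univ_two]
    simp
  rw [vnEntropy, dif_pos hA, Fin.sum_univ_two, htangle,
    binEnt_half_add_half_sqrt_one_sub_four_mul hsum]
end
end

section
/- Let ψ be a unit vector in ℂ^{dA} ⊗ ℂ^{dB} and ρ = |ψ⟩⟨ψ|. Then the I-tangle of the pure state satisfies ⟨ψ| ρ̃ |ψ⟩ = 2(1 − tr(ρ_A²)), where ρ_A is the partial trace of ρ over the second factor. -/
open Matrix Kronecker
open scoped ComplexOrder

noncomputable section

lemma termA {dA dB : ℕ} (ψ : Fin dA × Fin dB → ℂ) :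
    star ψ ⬝ᵥ (((ptraceA (outer ψ))ᴴ ⊗ₖ (1 : Matrix (Fin dB) (Fin dB) ℂ)) *ᵥ ψ)
      = Matrix.trace (ptraceA (outer ψ) * ptraceA (outer ψ)) := by
  simp only [dotProduct, Matrix.mulVec, Matrix.kroneckerMap_apply,
    Matrix.trace, Matrix.diag, Matrix.mul_apply, ptraceA, outer,
    Matrix.conjTranspose_apply, Matrix.vecMulVec_apply, Matrix.of_apply,
    Pi.star_apply, Matrix.one_apply, Fintype.sum_prod_type, mul_ite, mul_one, mul_zero,
    ite_mul, zero_mul, Finset.sum_ite_eq, Finset.sum_ite_eq', Finset.mem_univ, if_true,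
    star_sum, star_mul', star_star, Finset.sum_mul, Finset.mul_sum]
  refine Finset.sum_congr rfl fun x _ => ?_
  rw [Finset.sum_comm]
  refine Finset.sum_congr rfl fun a _ => ?_
  refine Finset.sum_congr rfl fun b _ => ?_
  refine Finset.sum_congr rfl fun c _ => ?_
  ring

lemma termB {dA dB : ℕ} (ψ : Fin dA × Fin dB → ℂ) :
    star ψ ⬝ᵥ (((1 : Matrix (Fin dA) (Fin dA) ℂ) ⊗ₖ (ptraceB (outer ψ))ᴴ) *ᵥ ψ)
      = Matrix.trace (ptraceA (outer ψ) * ptraceA (outer ψ)) := by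
  simp only [dotProduct, Matrix.mulVec, Matrix.kroneckerMap_apply,
    Matrix.trace, Matrix.diag, Matrix.mul_apply, ptraceA, ptraceB, outer,
    Matrix.conjTranspose_apply, Matrix.vecMulVec_apply, Matrix.of_apply,
    Pi.star_apply, Matrix.one_apply, Fintype.sum_prod_type, mul_ite, mul_one, mul_zero,
    ite_mul, zero_mul, one_mul, Finset.sum_ite_irrel, Finset.sum_const_zero,
    Finset.sum_ite_eq, Finset.sum_ite_eq', Finset.mem_univ, if_true,
    star_sum, star_mul', star_star, Finset.sum_mul, Finset.mul_sum]
  conv_lhs => enter [2, x, 2, x1]; rw [Finset.sum_comm]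
  conv_lhs => enter [2, x]; rw [Finset.sum_comm]
  rw [Finset.sum_comm]
  conv_lhs => enter [2, a, 2, b]; rw [Finset.sum_comm]
  refine Finset.sum_congr rfl fun a _ => ?_
  refine Finset.sum_congr rfl fun b _ => ?_
  refine Finset.sum_congr rfl fun c _ => ?_
  refine Finset.sum_congr rfl fun d _ => ?_
  ring

/-- For a unit vector ψ with ρ = |ψ⟩⟨ψ|, the pure-state I-tangle satisfies
⟨ψ| ρ̃ |ψ⟩ = 2(1 − tr(ρ_A²)). -/
theorem pure_tangle_eq_two_sub_purity {dA dB : ℕ} (ψ : Fin dA × Fin dB → ℂ)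
    (hψ : star ψ ⬝ᵥ ψ = 1) :
    star ψ ⬝ᵥ (inverter (outer ψ) *ᵥ ψ) =
      2 * (1 - Matrix.trace (ptraceA (outer ψ) * ptraceA (outer ψ))) := by
  have hsum : ∑ x, (starRingEnd ℂ) (ψ x) * ψ x = 1 := by
    simpa [dotProduct, Pi.star_apply] using hψ
  have htr : Matrix.trace (outer ψ)ᴴ = 1 := by
    simp only [Matrix.trace, Matrix.diag, Matrix.conjTranspose_apply, outer,
      Matrix.vecMulVec_apply, Pi.star_apply, star_mul', star_star]
    simpa using hsum
  have hout : star ψ ⬝ᵥ ((outer ψ)ᴴ *ᵥ ψ) = 1 := by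
    simp only [dotProduct, Matrix.mulVec, outer, Matrix.conjTranspose_apply,
      Matrix.vecMulVec_apply, Pi.star_apply, star_mul', star_star,
      Finset.mul_sum, Finset.sum_mul]
    calc (∑ x, ∑ y, star (ψ x) * (star (ψ y) * ψ x * ψ y))
        = (∑ x, (starRingEnd ℂ) (ψ x) * ψ x) * (∑ y, (starRingEnd ℂ) (ψ y) * ψ y) := by
          rw [Finset.sum_mul_sum]
          exact Finset.sum_congr rfl fun x _ => Finset.sum_congr rfl fun y _ => by
            simp only [RCLike.star_def]; ring
      _ = 1 := by rw [hsum]; ring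
  have hone : star ψ ⬝ᵥ ((1 : Matrix (Fin dA × Fin dB) (Fin dA × Fin dB) ℂ) *ᵥ ψ) = 1 := by
    rw [Matrix.one_mulVec]; exact hψ
  rw [inverter, Matrix.add_mulVec, Matrix.sub_mulVec, Matrix.sub_mulVec,
    Matrix.smul_mulVec, dotProduct_add, dotProduct_sub,
    dotProduct_sub, dotProduct_smul, htr, hout, hone,
    termA, termB]
  simp only [smul_eq_mul]
  ring
end
end
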